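/- Suppose b_{ik} > 0 for all i, k, ω_k > 0 and a_k > 0 for all k, and let μ and ν both be dual-feasible, i.e. each has all entries ≥ 0, at least one entry > 0, and satisfies β_{ij}·(entry j) ≤ (entry i) for all i ≠ j. Define the dual function f(λ) = L(λ, p(λ), 0), where p_k(λ) = max(ω_k/(ln 2 · ∑_i b_{ik} λ_i) − 1/a_k, 0). Then the vector g with g_i = E_i − ∑_k b_{ik} p_k(μ) is a subgradient of f at μ: f(ν) ≥ f(μ) + ∑_i g_i (ν_i − μ_i). -/

import Mathlib

open Finset

/-- The Lagrangian of problem (P1). -/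
noncomputable def Lagrangian {N K : ℕ} (a : Fin K → ℝ) (b : Fin N → Fin K → ℝ)
    (ω : Fin K → ℝ) (E : Fin N → ℝ) (β : Fin N → Fin N → ℝ)
    (μ : Fin N → ℝ) (p : Fin K → ℝ) (e : Fin N → Fin N → ℝ) : ℝ :=
  (∑ k, (ω k * Real.logb 2 (1 + a k * p k) - (∑ i, b i k * μ i) * p k))
    + (∑ i, ∑ j, if i = j then 0 else (β i j * μ j - μ i) * e i j)
    + (∑ i, μ i * E i)

/-- The water-filling power allocation
`p_k(λ) = max (ω_k/(ln 2 · ∑_i b_{ik} λ_i) − 1/a_k) 0`. -/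
noncomputable def waterfillPower {N K : ℕ} (a : Fin K → ℝ) (b : Fin N → Fin K → ℝ)
    (ω : Fin K → ℝ) (lam : Fin N → ℝ) (k : Fin K) : ℝ :=
  max (ω k / (Real.log 2 * ∑ i, b i k * lam i) - 1 / a k) 0

/-- The dual function `f(λ) = L(λ, p(λ), 0)`. -/
noncomputable def dualFun {N K : ℕ} (a : Fin K → ℝ) (b : Fin N → Fin K → ℝ)
    (ω : Fin K → ℝ) (E : Fin N → ℝ) (β : Fin N → Fin N → ℝ)
    (lam : Fin N → ℝ) : ℝ :=
  Lagrangian a b ω E β lam (waterfillPower a b ω lam) 0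

/-!
The dual function is a pointwise maximum of functions affine in the dual variable:
`f(ν) = max_{p ≥ 0} L(ν, p, 0) ≥ L(ν, p(μ), 0)`, and `L(·, p(μ), 0)` is affine with gradient `g`
and equals `f(μ)` at `μ`. The maximum over `p` separates into one concave problem
`max_{q ≥ 0} w log₂(1 + A q) − c q` per terminal, which water-filling solves.
-/

open Real

lemma Real.log_sub_log_le_div {x y : ℝ} (hx : 0 < x) (hy : 0 < y) :
    log x - log y ≤ (x - y) / y := by
  rw [sub_div, div_self hy.ne', ← log_div hx.ne' hy.ne']
  exact log_le_sub_one_of_pos (div_pos hx hy)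

noncomputable def waterfill (w A c : ℝ) : ℝ :=
  max (w / (log 2 * c) - 1 / A) 0

lemma waterfill_nonneg (w A c : ℝ) : 0 ≤ waterfill w A c :=
  le_max_right _ _

/-- KKT condition at `q* = waterfill w A c`: the slope `w A / (ln 2 · (1 + A q*))` of the log term
is at most `c`, with equality unless `q* = 0`. -/
lemma waterfill_optimality_condition {w A c : ℝ} (hA : 0 < A) (hc : 0 < c) {q : ℝ}
    (hq : 0 ≤ q) :
    w * A * (q - waterfill w A c) ≤
      log 2 * c * (1 + A * waterfill w A c) * (q - waterfill w A c) := by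
  have hlc : 0 < log 2 * c := mul_pos (log_pos one_lt_two) hc
  rcases le_total (w / (log 2 * c) - 1 / A) 0 with h | h
  · rw [waterfill, max_eq_right h, sub_zero, mul_zero, add_zero, mul_one]
    have hwA : w * A ≤ log 2 * c := by
      rw [sub_nonpos, div_le_div_iff₀ hlc hA] at h
      linarith
    exact mul_le_mul_of_nonneg_right hwA hq
  · rw [waterfill, max_eq_left h]
    apply le_of_eq
    congr 1
    field_simp
    ring

lemma waterfill_isMaxOn {w A c : ℝ} (hw : 0 < w) (hA : 0 < A) (hc : 0 < c) :
    IsMaxOn (fun q => w * logb 2 (1 + A * q) - c * q) (Set.Ici 0) (waterfill w A c) := by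
  rw [isMaxOn_iff]
  intro q (hq : 0 ≤ q)
  have hopt := waterfill_optimality_condition (w := w) hA hc hq
  set s := waterfill w A c
  have hy : 0 < 1 + A * s := by
    have := waterfill_nonneg w A c
    positivity
  have hlog : w * (log (1 + A * q) - log (1 + A * s)) ≤ log 2 * (c * (q - s)) :=
    calc w * (log (1 + A * q) - log (1 + A * s))
        ≤ w * ((1 + A * q - (1 + A * s)) / (1 + A * s)) := by
          gcongr
          exact log_sub_log_le_div (by positivity) hy
      _ = w * A * (q - s) / (1 + A * s) := by ring
      _ ≤ log 2 * (c * (q - s)) := by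
          rw [div_le_iff₀ hy]
          linarith
  have hlogb : w * logb 2 (1 + A * q) - w * logb 2 (1 + A * s) ≤ c * (q - s) := by
    rw [logb, logb, ← mul_sub, ← sub_div, mul_div_assoc', div_le_iff₀' (log_pos one_lt_two)]
    exact hlog
  linarith

section Lagrangian

variable {N K : ℕ} (a : Fin K → ℝ) (b : Fin N → Fin K → ℝ) (ω : Fin K → ℝ) (E : Fin N → ℝ)
  (β : Fin N → Fin N → ℝ)

lemma Lagrangian_zero_transfer (μ : Fin N → ℝ) (p : Fin K → ℝ) :
    Lagrangian a b ω E β μ p 0 =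
      ∑ k, ω k * logb 2 (1 + a k * p k) + ∑ i, μ i * (E i - ∑ k, b i k * p k) := by
  simp only [Lagrangian, Pi.zero_apply, mul_zero, ite_self, sum_const_zero, add_zero,
    sum_sub_distrib, mul_sub, sum_mul, mul_sum]
  rw [sum_comm (f := fun k i => b i k * μ i * p k)]
  simp only [mul_comm, mul_left_comm]
  ring

lemma Lagrangian_zero_transfer_eq_add (μ ν : Fin N → ℝ) (p : Fin K → ℝ) :
    Lagrangian a b ω E β ν p 0 =
      Lagrangian a b ω E β μ p 0 + ∑ i, (E i - ∑ k, b i k * p k) * (ν i - μ i) := by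
  simp only [Lagrangian_zero_transfer, mul_sub (E _ - _), sum_sub_distrib, mul_comm (E _ - _)]
  ring

variable {a b ω}

lemma Lagrangian_zero_transfer_le_dualFun (hω : ∀ k, 0 < ω k) (ha : ∀ k, 0 < a k)
    {ν : Fin N → ℝ} (hload : ∀ k, 0 < ∑ i, b i k * ν i) {p : Fin K → ℝ} (hp : ∀ k, 0 ≤ p k) :
    Lagrangian a b ω E β ν p 0 ≤ dualFun a b ω E β ν := by
  rw [dualFun, Lagrangian, Lagrangian]
  gcongr ?_ + _ + _
  exact sum_le_sum fun k _ => waterfill_isMaxOn (hω k) (ha k) (hload k) (hp k)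

end Lagrangian

theorem dual_subgradient_general {N K : ℕ}
    (a : Fin K → ℝ) (b : Fin N → Fin K → ℝ) (ω : Fin K → ℝ)
    (E : Fin N → ℝ) (β : Fin N → Fin N → ℝ)
    (hb : ∀ i k, 0 < b i k) (hω : ∀ k, 0 < ω k) (ha : ∀ k, 0 < a k)
    (μ ν : Fin N → ℝ)
    (hν_nonneg : ∀ i, 0 ≤ ν i) (hν_pos : ∃ i, 0 < ν i) :
    dualFun a b ω E β ν ≥
      dualFun a b ω E β μ
        + ∑ i, (E i - ∑ k, b i k * waterfillPower a b ω μ k) * (ν i - μ i) := by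
  obtain ⟨i₀, hi₀⟩ := hν_pos
  have hload : ∀ k, 0 < ∑ i, b i k * ν i := fun k =>
    sum_pos' (fun i _ => mul_nonneg (hb i k).le (hν_nonneg i))
      ⟨i₀, mem_univ i₀, mul_pos (hb i₀ k) hi₀⟩
  have hle := Lagrangian_zero_transfer_le_dualFun E β hω ha hload
    (p := waterfillPower a b ω μ) fun k => waterfill_nonneg _ _ _
  rwa [Lagrangian_zero_transfer_eq_add a b ω E β μ] at hle

/-- `g_i = E_i − ∑_k b_{ik} p_k(μ)` is a subgradient of the dual function at any
dual-feasible `μ`, with respect to any other dual-feasible point `ν`. -/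
theorem dual_subgradient {N K : ℕ}
    (a : Fin K → ℝ) (b : Fin N → Fin K → ℝ) (ω : Fin K → ℝ)
    (E : Fin N → ℝ) (β : Fin N → Fin N → ℝ)
    (hb : ∀ i k, 0 < b i k) (hω : ∀ k, 0 < ω k) (ha : ∀ k, 0 < a k)
    (μ ν : Fin N → ℝ)
    (hμ_nonneg : ∀ i, 0 ≤ μ i) (hμ_pos : ∃ i, 0 < μ i)
    (hμ_feas : ∀ i j : Fin N, i ≠ j → β i j * μ j ≤ μ i)
    (hν_nonneg : ∀ i, 0 ≤ ν i) (hν_pos : ∃ i, 0 < ν i)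
    (hν_feas : ∀ i j : Fin N, i ≠ j → β i j * ν j ≤ ν i) :
    dualFun a b ω E β ν ≥
      dualFun a b ω E β μ
        + ∑ i, (E i - ∑ k, b i k * waterfillPower a b ω μ k) * (ν i - μ i) :=
  dual_subgradient_general a b ω E β hb hω ha μ ν hν_nonneg hν_pos
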